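/- Fix M > 0. (a) Let ρ ↦ q(ρ) ∈ (0,1) be any function on (0,∞) such that for every ρ > 0: 2(1 − e^{−M}) ≤ e^{−M} ρ log(1/q(ρ)) ≤ 2, and for every n ∈ ℕ the total mass Σ_{(r_1,...,r_n)∈ℕ^n} Π_{i=1}^n (1−q(ρ))^{r_i} ρ F_M(r_{i−1}, r_i, u_{i−1}) lies in [1 − e^{−M}, 1]. Then lim_{ρ→0+} ρ log(1/q(ρ)) = 2(e^M − 1). (b) Fix ρ > 0 and let M ↦ q(M) ∈ (0,1) satisfy the same two properties for every M > 0; then lim_{M→∞} e^{−M} log(1/q(M)) = 2/ρ. -/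

import Mathlib

open MeasureTheory ProbabilityTheory Filter Set

noncomputable section

/-- The function `F_M : (ℕ ∪ {0}) × ℕ × [0,1] → [0,1]` of the paper. -/
def FM (M : ℝ) (ℓ r : ℕ) (u : ℝ) : ℝ :=
  if ℓ = 0 then Real.exp (-M) / (2 * (r : ℝ))
  else Real.exp (-M) / (2 * (r : ℝ)) *
    (1 - Real.exp (-M) * (1 - 1 / (2 * (r : ℝ)) - (1 - u) / (2 * (ℓ : ℝ))))⁻¹

/-- The recursion `u₀ = 0`, `u_i = F_M(r_{i-1}, r_i, u_{i-1})` (one takes `r 0 = 0`). -/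
def uSeq (M : ℝ) (r : ℕ → ℕ) : ℕ → ℝ
  | 0 => 0
  | (i + 1) => FM M (r i) (r (i + 1)) (uSeq M r i)

/-- Extend a tuple `(r_1, …, r_n)` of positive integers to a function `ℕ → ℕ`
with value `r_i` at `i ∈ {1, …, n}` and `0` elsewhere (in particular `r 0 = 0`). -/
def ext (n : ℕ) (r : Fin n → ℕ+) (i : ℕ) : ℕ :=
  if h : 1 ≤ i ∧ i ≤ n then (r ⟨i - 1, by omega⟩ : ℕ) else 0

/-- Combine a fixed prefix `rp` (used for indices `< m`) with a summation variable
`s = (r_m, …, r_n)` of positive integers, into a single gap function `ℕ → ℕ`. -/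
def combine (m n : ℕ) (rp : ℕ → ℕ) (s : Fin (n + 1 - m) → ℕ+) (i : ℕ) : ℕ :=
  if i < m then rp i
  else if h : i - m < n + 1 - m then (s ⟨i - m, h⟩ : ℕ) else 0

/-- `Σ_{(r_m,…,r_n)∈ℕ^{n−m+1}} Π_{i=m}^n (1−q)^{r_i} ρ F_M(r_{i−1}, r_i, u_{i−1})`,
with the gaps `r_0 = 0, r_1, …, r_{m−1}` given by the prefix `rp`. -/
def Smass (M ρ q : ℝ) (m n : ℕ) (rp : ℕ → ℕ) : ℝ :=
  ∑' s : Fin (n + 1 - m) → ℕ+, ∏ i ∈ Finset.Icc m n,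
    (1 - q) ^ (combine m n rp s i) * ρ *
      FM M (combine m n rp s (i - 1)) (combine m n rp s i)
        (uSeq M (combine m n rp s) (i - 1))

/-!
The lower bound in (a) and both bounds in (b) are the hypothesis
`2(1 - e^{-M}) ≤ e^{-M} ρ log(1/q) ≤ 2` rearranged. For the upper bound in (a) fix a cutoff `R`.
When all gaps exceed `R`, every factor `F_M(r_{i-1}, r_i, u)` with `i ≥ 2` is at least
`K e^{-M}/(2 r_i)`, where `K = (1 - e^{-M} + e^{-M}/R)⁻¹`. Restricting the mass of length `m + 1`
to such gaps and summing gap by gap bounds it below by `L (K L)^m`, where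
`L = (ρ e^{-M}/2) Σ_{r > R} (1-q)^r/r ≥ (ρ e^{-M}/2)(log(1/q) - R)`. The masses stay `≤ 1`,
so `K L ≤ 1`, that is `ρ log(1/q) ≤ 2(e^M - 1) + 2/R + ρR`; let `ρ → 0`, then `R → ∞`.
-/

open Real Topology

lemma one_sub_exp_neg_add_div_pos {M R : ℝ} (hM : 0 ≤ M) (hR : 0 < R) :
    0 < 1 - exp (-M) + exp (-M) / R := by
  have hx : exp (-M) ≤ 1 := exp_le_one_iff.mpr (neg_nonpos.mpr hM)
  have : 0 < exp (-M) / R := by positivity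
  linarith

section FM

variable {M : ℝ} {ℓ r : ℕ} {u : ℝ}

lemma FM_zero_left : FM M 0 r u = exp (-M) / (2 * r) := if_pos rfl

lemma FM_eq_div (hℓ : ℓ ≠ 0) :
    FM M ℓ r u = exp (-M) / (2 * r) /
      (1 - exp (-M) + exp (-M) / (2 * r) + exp (-M) * (1 - u) / (2 * ℓ)) := by
  rw [FM, if_neg hℓ, div_eq_mul_inv]
  ring_nf

lemma FM_mem_Icc (hM : 0 ≤ M) (hu : u ∈ Icc (0 : ℝ) 1) : FM M ℓ r u ∈ Icc (0 : ℝ) 1 := by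
  have hx : exp (-M) ≤ 1 := exp_le_one_iff.mpr (neg_nonpos.mpr hM)
  rcases eq_or_ne ℓ 0 with rfl | hℓ
  · rw [FM_zero_left]
    refine ⟨by positivity, ?_⟩
    rcases Nat.eq_zero_or_pos r with rfl | hr
    · simp
    · have : (1 : ℝ) ≤ r := by exact_mod_cast hr
      exact div_le_one_of_le₀ (by linarith) (by positivity)
  · have hnum : 0 ≤ exp (-M) / (2 * r) := by positivity
    have hrest : 0 ≤ exp (-M) * (1 - u) / (2 * ℓ) :=
      div_nonneg (mul_nonneg (exp_pos _).le (by linarith [hu.2])) (by positivity)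
    rw [FM_eq_div hℓ]
    exact ⟨div_nonneg hnum (by linarith), div_le_one_of_le₀ (by linarith) (by linarith)⟩

lemma div_one_sub_add_div_le_FM (hM : 0 ≤ M) {R : ℝ} (hR : 0 < R) (hℓ : R ≤ ℓ) (hr : R ≤ r)
    (hu : u ∈ Icc (0 : ℝ) 1) :
    exp (-M) / (2 * r) / (1 - exp (-M) + exp (-M) / R) ≤ FM M ℓ r u := by
  have hx0 := exp_pos (-M)
  rw [FM_eq_div (by rintro rfl; simp at hℓ; linarith)]
  have h1 : exp (-M) / (2 * r) ≤ exp (-M) / (2 * R) := by gcongr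
  have h2 : exp (-M) * (1 - u) / (2 * ℓ) ≤ exp (-M) / (2 * R) :=
    calc _ ≤ exp (-M) / (2 * ℓ) := by
          gcongr
          exact mul_le_of_le_one_right hx0.le (by linarith [hu.1])
      _ ≤ _ := by gcongr
  have h3 : 0 ≤ exp (-M) * (1 - u) / (2 * ℓ) :=
    div_nonneg (mul_nonneg hx0.le (by linarith [hu.2])) (by positivity)
  have hD := one_sub_exp_neg_add_div_pos hM (show (0 : ℝ) < 2 * r by linarith)
  apply div_le_div_of_nonneg_left (by positivity) (by linarith)
  calc _ ≤ 1 - exp (-M) + exp (-M) / (2 * R) + exp (-M) / (2 * R) := by linarith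
    _ = _ := by ring

end FM

lemma uSeq_mem_Icc {M : ℝ} (hM : 0 ≤ M) (r : ℕ → ℕ) (i : ℕ) : uSeq M r i ∈ Icc (0 : ℝ) 1 := by
  induction i with
  | zero => simp [uSeq]
  | succ i ih => exact FM_mem_Icc hM ih

lemma hasSum_pnat_pow_div_log_of_abs_lt_one {x : ℝ} (hx : |x| < 1) :
    HasSum (fun r : ℕ+ => x ^ (r : ℕ) / r) (-log (1 - x)) := by
  rw [hasSum_pnat_iff_hasSum_succ (f := fun n : ℕ => x ^ n / n)]
  simpa using Real.hasSum_pow_div_log_of_abs_lt_one hx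

lemma neg_log_one_sub_sub_le_tsum_indicator {x : ℝ} (hx0 : 0 ≤ x) (hx1 : x < 1) (R : ℕ+) :
    -log (1 - x) - R ≤ ∑' r : ℕ+, {r | R < r}.indicator (fun r : ℕ+ => x ^ (r : ℕ) / r) r := by
  have hsum := hasSum_pnat_pow_div_log_of_abs_lt_one (abs_lt.mpr ⟨by linarith, hx1⟩)
  have hle_one (r : ℕ+) : x ^ (r : ℕ) / r ≤ 1 :=
    div_le_one_of_le₀ ((pow_le_one₀ hx0 hx1.le).trans (by exact_mod_cast r.pos)) (by positivity)
  have hhead : ∑ r ∈ Finset.Icc 1 R, x ^ (r : ℕ) / (r : ℝ) ≤ R := by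
    calc _ ≤ (Finset.Icc 1 R).card • (1 : ℝ) := Finset.sum_le_card_nsmul _ _ 1 fun r _ => hle_one r
      _ = R := by simp
  have htail : ∑' r : ↑((Finset.Icc 1 R : Finset ℕ+) : Set ℕ+)ᶜ, x ^ (r : ℕ) / (r : ℝ) =
      ∑' r : ℕ+, {r | R < r}.indicator (fun r : ℕ+ => x ^ (r : ℕ) / r) r := by
    have hcompl : ((Finset.Icc 1 R : Finset ℕ+) : Set ℕ+)ᶜ = {r | R < r} := by
      ext r
      simp [one_le]
    rw [tsum_subtype _ fun r : ℕ+ => x ^ (r : ℕ) / (r : ℝ), hcompl]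
  rw [← htail, ← hsum.tsum_eq, ← hsum.summable.sum_add_tsum_compl (s := Finset.Icc 1 R)]
  linarith

lemma ENNReal.tsum_fin_pi_prod {β : Type*} {n : ℕ} (f : Fin n → β → ENNReal) :
    ∑' s : Fin n → β, ∏ j, f j (s j) = ∏ j, ∑' b, f j b := by
  induction n with
  | zero => simp
  | succ n ih =>
    rw [← (Fin.consEquiv fun _ => β).tsum_eq, ENNReal.tsum_prod', Fin.prod_univ_succ]
    simp only [Fin.consEquiv_apply, Fin.prod_univ_succ, Fin.cons_zero, Fin.cons_succ,
      ENNReal.tsum_mul_left, ENNReal.tsum_mul_right, ih fun j => f j.succ]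

lemma prod_tsum_le_tsum_of_prod_le {β : Type*} {n : ℕ} {g : Fin n → β → ℝ}
    {P : (Fin n → β) → ℝ} (hg : ∀ j b, 0 ≤ g j b) (hgs : ∀ j, Summable (g j))
    (hP : Summable P) (hle : ∀ s, ∏ j, g j (s j) ≤ P s) :
    ∏ j, ∑' b, g j b ≤ ∑' s, P s := by
  have hP0 s : 0 ≤ P s := (Finset.prod_nonneg fun j _ => hg j (s j)).trans (hle s)
  rw [← ENNReal.ofReal_le_ofReal_iff (tsum_nonneg hP0),
    ENNReal.ofReal_prod_of_nonneg fun j _ => tsum_nonneg (hg j),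
    ENNReal.ofReal_tsum_of_nonneg hP0 hP]
  simp_rw [ENNReal.ofReal_tsum_of_nonneg (hg _) (hgs _), ← ENNReal.tsum_fin_pi_prod,
    ← ENNReal.ofReal_prod_of_nonneg fun j _ => hg j _]
  exact ENNReal.tsum_le_tsum fun s => ENNReal.ofReal_le_ofReal (hle s)

lemma prod_Icc_one_eq_prod_fin {α : Type*} [CommMonoid α] (f : ℕ → α) (n : ℕ) :
    ∏ i ∈ Finset.Icc 1 n, f i = ∏ k : Fin n, f (k + 1) := by
  rw [Fin.prod_univ_eq_prod_range (fun k => f (k + 1)), Finset.range_eq_Ico,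
    Finset.prod_Ico_add' f, zero_add]
  rfl

section Gaps

variable {n : ℕ} (s : Fin n → ℕ+)

lemma combine_one_zero : combine 1 n (fun _ => 0) s 0 = 0 := rfl

lemma combine_one_succ (k : Fin n) : combine 1 n (fun _ => 0) s (k + 1) = s k := by
  simp [combine]

end Gaps

lemma Smass_one_eq (M ρ q : ℝ) (n : ℕ) :
    Smass M ρ q 1 n (fun _ => 0) = ∑' s : Fin n → ℕ+, ∏ k : Fin n, (1 - q) ^ (s k : ℕ) * ρ *
      FM M (combine 1 n (fun _ => 0) s k) (s k) (uSeq M (combine 1 n (fun _ => 0) s) k) := by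
  refine tsum_congr fun s => ?_
  rw [prod_Icc_one_eq_prod_fin]
  simp only [combine_one_succ, Nat.add_sub_cancel]

-- The factor `(1 - q)^r ρ F_M(0, r, ·)` of a first gap `r`, kept only for `r > R`.
def cutWeight (M ρ q : ℝ) (R r : ℕ+) : ℝ :=
  ρ * exp (-M) / 2 * {r | R < r}.indicator (fun r : ℕ+ => (1 - q) ^ (r : ℕ) / r) r

section CutWeight

variable {M ρ q : ℝ} {R : ℕ+}

lemma cutWeight_nonneg (hρ : 0 ≤ ρ) (hq : q ≤ 1) (r : ℕ+) : 0 ≤ cutWeight M ρ q R r := by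
  have : 0 ≤ 1 - q := by linarith
  exact mul_nonneg (by positivity) (Set.indicator_nonneg (fun r _ => by positivity) r)

lemma summable_cutWeight (hq : q ∈ Ioo 0 1) : Summable (cutWeight M ρ q R) := by
  have hx : |1 - q| < 1 := abs_lt.mpr ⟨by linarith [hq.2], by linarith [hq.1]⟩
  exact ((hasSum_pnat_pow_div_log_of_abs_lt_one hx).summable.indicator _).mul_left _

lemma mul_log_sub_le_tsum_cutWeight (hρ : 0 ≤ ρ) (hq : q ∈ Ioo 0 1) :
    ρ * exp (-M) / 2 * (log (1 / q) - R) ≤ ∑' r, cutWeight M ρ q R r := by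
  have h := neg_log_one_sub_sub_le_tsum_indicator (x := 1 - q) (by linarith [hq.2])
    (by linarith [hq.1]) R
  rw [sub_sub_cancel, ← log_inv, ← one_div] at h
  simp only [cutWeight]
  rw [tsum_mul_left]
  exact mul_le_mul_of_nonneg_left h (by positivity)

end CutWeight

section Mass

variable {M ρ q : ℝ} {R : ℕ+} {m : ℕ}

lemma prod_cutWeight_le_prod_FM (hM : 0 ≤ M) (hρ : 0 ≤ ρ) (hq : q ≤ 1)
    (s : Fin (m + 1) → ℕ+) :
    ∏ k, (Fin.cons (cutWeight M ρ q R)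
        fun _ r => (1 - exp (-M) + exp (-M) / R)⁻¹ * cutWeight M ρ q R r :
          Fin (m + 1) → ℕ+ → ℝ) k (s k) ≤
      ∏ k, (1 - q) ^ (s k : ℕ) * ρ * FM M (combine 1 (m + 1) (fun _ => 0) s k) (s k)
        (uSeq M (combine 1 (m + 1) (fun _ => 0) s) k) := by
  have hq' : 0 ≤ 1 - q := by linarith
  have hK := one_sub_exp_neg_add_div_pos hM (show (0 : ℝ) < R by positivity)
  have hfactor (k : Fin (m + 1)) : 0 ≤ (1 - q) ^ (s k : ℕ) * ρ *
      FM M (combine 1 (m + 1) (fun _ => 0) s k) (s k)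
        (uSeq M (combine 1 (m + 1) (fun _ => 0) s) k) :=
    mul_nonneg (by positivity) (FM_mem_Icc hM (uSeq_mem_Icc hM _ _)).1
  by_cases hs : ∀ k, R < s k
  · rw [Fin.prod_univ_succ, Fin.prod_univ_succ]
    simp only [Fin.cons_zero, Fin.cons_succ]
    have hweight (j : Fin m) :
        0 ≤ (1 - exp (-M) + exp (-M) / R)⁻¹ * cutWeight M ρ q R (s j.succ) :=
      mul_nonneg (inv_nonneg.mpr hK.le) (cutWeight_nonneg hρ hq _)
    refine mul_le_mul ?_ (Finset.prod_le_prod (fun j _ => hweight j) fun j _ => ?_)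
      (Finset.prod_nonneg fun j _ => hweight j) (hfactor 0)
    · rw [cutWeight, Set.indicator_of_mem (show s 0 ∈ {r | R < r} from hs 0)]
      simp only [Fin.val_zero, combine_one_zero, FM_zero_left]
      exact le_of_eq (by ring)
    · have hprev : combine 1 (m + 1) (fun _ => 0) s j.succ = s j.castSucc := by
        rw [Fin.val_succ, ← Fin.val_castSucc]
        exact combine_one_succ s j.castSucc
      have hle (k : Fin (m + 1)) : (R : ℝ) ≤ (s k : ℕ) := by exact_mod_cast (hs k).le
      rw [cutWeight, Set.indicator_of_mem (show s j.succ ∈ {r | R < r} from hs j.succ)]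
      calc _ = (1 - q) ^ (s j.succ : ℕ) * ρ *
            (exp (-M) / (2 * (s j.succ : ℕ)) / (1 - exp (-M) + exp (-M) / R)) := by ring
        _ ≤ _ := by
          gcongr
          rw [hprev]
          exact div_one_sub_add_div_le_FM hM (by positivity) (hle _) (hle _) (uSeq_mem_Icc hM _ _)
  · obtain ⟨k, hk⟩ := not_forall.mp hs
    refine (Finset.prod_eq_zero (Finset.mem_univ k) ?_).trans_le
      (Finset.prod_nonneg fun k _ => hfactor k)
    cases k using Fin.cases <;> simp [cutWeight, Set.indicator_of_notMem, hk]

lemma tsum_cutWeight_mul_pow_le_Smass (hM : 0 ≤ M) (hρ : 0 ≤ ρ) (hq : q ∈ Ioo 0 1)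
    (hpos : 0 < Smass M ρ q 1 (m + 1) (fun _ => 0)) :
    (∑' r, cutWeight M ρ q R r) *
        ((1 - exp (-M) + exp (-M) / R)⁻¹ * ∑' r, cutWeight M ρ q R r) ^ m ≤
      Smass M ρ q 1 (m + 1) (fun _ => 0) := by
  rw [Smass_one_eq] at hpos ⊢
  have hsum := Classical.byContradiction fun h => hpos.ne' (tsum_eq_zero_of_not_summable h)
  set g : Fin (m + 1) → ℕ+ → ℝ := Fin.cons (cutWeight M ρ q R)
    fun _ r => (1 - exp (-M) + exp (-M) / R)⁻¹ * cutWeight M ρ q R r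
  have hK := (inv_pos.mpr (one_sub_exp_neg_add_div_pos hM (show (0 : ℝ) < R by positivity))).le
  have hg j r : 0 ≤ g j r := by
    cases j using Fin.cases
    · exact cutWeight_nonneg hρ hq.2.le r
    · exact mul_nonneg hK (cutWeight_nonneg hρ hq.2.le r)
  have hgs j : Summable (g j) := by
    cases j using Fin.cases
    · exact summable_cutWeight hq
    · exact (summable_cutWeight hq).mul_left _
  calc _ = ∏ j, ∑' r, g j r := by
        simp [g, Fin.prod_univ_succ, tsum_mul_left]
    _ ≤ _ := prod_tsum_le_tsum_of_prod_le hg hgs hsum (prod_cutWeight_le_prod_FM hM hρ hq.2.le)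

end Mass

lemma le_one_of_forall_mul_pow_le {a x : ℝ} (ha : 0 < a) (h : ∀ m : ℕ, a * x ^ m ≤ 1) :
    x ≤ 1 := by
  by_contra! hx
  obtain ⟨m, hm⟩ :=
    ((tendsto_pow_atTop_atTop_of_one_lt hx).eventually_gt_atTop (1 / a)).exists
  have := (div_lt_iff₀' ha).mp hm
  linarith [h m]

lemma mul_log_le_of_Smass_le_one {M ρ q : ℝ} (hM : 0 ≤ M) (hρ : 0 < ρ) (hq : q ∈ Ioo 0 1)
    (hpos : ∀ m, 0 < Smass M ρ q 1 (m + 1) (fun _ => 0))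
    (hle : ∀ m, Smass M ρ q 1 (m + 1) (fun _ => 0) ≤ 1) (R : ℕ+) :
    ρ * log (1 / q) ≤ 2 * (exp M - 1) + 2 / R + ρ * R := by
  have hD := one_sub_exp_neg_add_div_pos hM (show (0 : ℝ) < R by positivity)
  have hL : ∑' r, cutWeight M ρ q R r ≤ 1 - exp (-M) + exp (-M) / R := by
    set L := ∑' r, cutWeight M ρ q R r
    rcases le_or_gt L 0 with hL | hL
    · exact hL.trans hD.le
    have hKL := le_one_of_forall_mul_pow_le hL fun m =>
      (tsum_cutWeight_mul_pow_le_Smass hM hρ.le hq (hpos m)).trans (hle m)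
    rwa [inv_mul_le_iff₀ hD, mul_one] at hKL
  have key := (mul_log_sub_le_tsum_cutWeight (M := M) (R := R) hρ.le hq).trans hL
  rw [exp_neg] at key
  field_simp at key
  have hR : (0 : ℝ) < R := by positivity
  calc ρ * log (1 / q) = ρ * R * (log (1 / q) - R) / R + ρ * R := by field_simp; ring
    _ ≤ 2 * (R * (exp M - 1) + 1) / R + ρ * R := by gcongr
    _ = _ := by field_simp

lemma tendsto_nhdsGT_zero_of_le_of_le_add {f : ℝ → ℝ} {L c : ℝ}
    (hlow : ∀ ρ > 0, L ≤ f ρ) (hup : ∀ ρ > 0, ∀ R : ℕ+, f ρ ≤ L + c / R + ρ * R) :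
    Tendsto f (𝓝[>] 0) (𝓝 L) := by
  refine tendsto_order.2 ⟨fun a ha => ?_, fun b hb => ?_⟩
  · filter_upwards [self_mem_nhdsWithin] with ρ hρ using ha.trans_le (hlow ρ hρ)
  obtain ⟨n, hn⟩ := exists_nat_gt (2 * c / (b - L))
  set R := n.succPNat
  have hR : (0 : ℝ) < R := by positivity
  have hcR : c / R < (b - L) / 2 := by
    have hnR : 2 * c / (b - L) < R := hn.trans (by simp [R])
    rw [div_lt_iff₀ (sub_pos.2 hb)] at hnR
    rw [div_lt_iff₀ hR]
    linarith
  filter_upwards [Ioo_mem_nhdsGT (show 0 < (b - L) / (2 * R) by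
    have := sub_pos.2 hb; positivity)] with ρ ⟨hρ0, hρ⟩
  have hρR : ρ * R < (b - L) / 2 := by
    rw [lt_div_iff₀ (by positivity)] at hρ
    linarith
  linarith [hup ρ hρ0 R]

open Filter in
/-- Proposition 3.6. (a) If `q(ρ) ∈ (0,1)` satisfies
`2(1−e^{−M}) ≤ e^{−M} ρ log(1/q(ρ)) ≤ 2` and the total-mass bounds
`1−e^{−M} ≤ Smass ≤ 1` for every `n`, then `ρ log(1/q(ρ)) → 2(e^M − 1)` as `ρ → 0+`.
(b) For fixed `ρ`, if `q(M)` satisfies the same properties for every `M > 0`, then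
`e^{−M} log(1/q(M)) → 2/ρ` as `M → ∞`. -/
theorem tilting_parameter_asymptotics :
    (∀ M : ℝ, 0 < M → ∀ qf : ℝ → ℝ,
      (∀ ρ : ℝ, 0 < ρ →
        qf ρ ∈ Set.Ioo (0 : ℝ) 1 ∧
        (2 * (1 - Real.exp (-M)) ≤ Real.exp (-M) * ρ * Real.log (1 / qf ρ) ∧
          Real.exp (-M) * ρ * Real.log (1 / qf ρ) ≤ 2) ∧
        ∀ n : ℕ, 1 ≤ n →
          1 - Real.exp (-M) ≤ Smass M ρ (qf ρ) 1 n (fun _ => 0) ∧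
            Smass M ρ (qf ρ) 1 n (fun _ => 0) ≤ 1) →
      Tendsto (fun ρ : ℝ => ρ * Real.log (1 / qf ρ)) (nhdsWithin 0 (Set.Ioi 0))
        (nhds (2 * (Real.exp M - 1)))) ∧
    (∀ ρ : ℝ, 0 < ρ → ∀ qf : ℝ → ℝ,
      (∀ M : ℝ, 0 < M →
        qf M ∈ Set.Ioo (0 : ℝ) 1 ∧
        (2 * (1 - Real.exp (-M)) ≤ Real.exp (-M) * ρ * Real.log (1 / qf M) ∧
          Real.exp (-M) * ρ * Real.log (1 / qf M) ≤ 2) ∧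
        ∀ n : ℕ, 1 ≤ n →
          1 - Real.exp (-M) ≤ Smass M ρ (qf M) 1 n (fun _ => 0) ∧
            Smass M ρ (qf M) 1 n (fun _ => 0) ≤ 1) →
      Tendsto (fun M : ℝ => Real.exp (-M) * Real.log (1 / qf M)) atTop
        (nhds (2 / ρ))) := by
  refine ⟨fun M hM qf hq => ?_, fun ρ hρ qf hq => ?_⟩
  · refine tendsto_nhdsGT_zero_of_le_of_le_add (c := 2) (fun ρ hρ => ?_) fun ρ hρ R => ?_
    · have h := (hq ρ hρ).2.1.1
      rw [exp_neg] at h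
      field_simp at h
      linarith
    · obtain ⟨hqρ, -, hmass⟩ := hq ρ hρ
      have hx : 0 < 1 - exp (-M) := sub_pos.2 (Real.exp_lt_one_iff.mpr (neg_neg_of_pos hM))
      linarith [mul_log_le_of_Smass_le_one hM.le hρ hqρ
        (fun m => hx.trans_le (hmass (m + 1) m.succ_pos).1)
        (fun m => (hmass (m + 1) m.succ_pos).2) R]
  · have hlim : Tendsto (fun M => 2 * (1 - exp (-M)) / ρ) atTop (𝓝 (2 / ρ)) := by
      simpa using ((tendsto_exp_neg_atTop_nhds_zero.const_sub 1).const_mul 2).div_const ρ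
    refine tendsto_of_tendsto_of_tendsto_of_le_of_le' hlim tendsto_const_nhds ?_ ?_ <;>
      filter_upwards [eventually_gt_atTop 0] with M hM
    · rw [div_le_iff₀ hρ, mul_right_comm]
      exact (hq M hM).2.1.1
    · rw [le_div_iff₀ hρ, mul_right_comm]
      exact (hq M hM).2.1.2

end
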